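/- Let ⟨·⟩₀ be a symmetric function assigning a rational number to each finite multiset {d₁,…,dₙ} of nonnegative integers with n ≥ 3, satisfying the string equation ⟨0, d₁,…,dₙ⟩₀ = Σ_{j : d_j ≥ 1} ⟨d₁,…,d_j − 1,…,dₙ⟩₀ for n ≥ 3, the normalization ⟨0,0,0⟩₀ = 1, and the vanishing ⟨d₁,…,dₙ⟩₀ = 0 unless d₁ + ⋯ + dₙ = n − 3. Then for all n ≥ 3 and all d₁,…,dₙ ≥ 0 with d₁ + ⋯ + dₙ = n − 3, one has ⟨d₁,…,dₙ⟩₀ = (n−3)! / (d₁!·d₂!⋯dₙ!). -/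

import Mathlib

/-!
On the dimension locus `d₁ + ⋯ + dₙ = n - 3` some `dᵢ` vanishes as soon as `n > 3`, so the string
equation expresses every value through values with one point fewer, still on the locus; by
induction on `n` from `⟨0,0,0⟩₀ = 1` the values there are unique. The multinomial formula satisfies
the same recursion: removing the zero and lowering `d_j` by one multiplies `(n-4)!/∏ dᵢ!` by `d_j`,
and `∑ d_j = n - 3` turns the sum of these terms into `(n-3)!/∏ dᵢ!`.
-/

namespace Multiset

lemma zero_mem_of_sum_lt_card {s : Multiset ℕ} (h : s.sum < card s) : 0 ∈ s := by
  by_contra h0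
  have hpos : ∀ x ∈ s, 1 ≤ x := fun x hx => Nat.one_le_iff_ne_zero.mpr (ne_of_mem_of_not_mem hx h0)
  have := card_nsmul_le_sum hpos
  rw [smul_eq_mul, mul_one] at this
  omega

lemma eq_zero_zero_zero_of_sum_eq_zero {s : Multiset ℕ} (hcard : card s = 3) (hsum : s.sum = 0) :
    s = {0, 0, 0} :=
  eq_replicate.mpr ⟨hcard, sum_eq_zero_iff.mp hsum⟩

lemma card_cons_erase {α : Type*} [DecidableEq α] {s : Multiset α} {a : α} (b : α) (ha : a ∈ s) :
    card (b ::ₘ s.erase a) = card s := by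
  rw [card_cons, card_erase_add_one ha]

lemma sum_cons_pred_erase {s : Multiset ℕ} {d : ℕ} (hd : d ∈ s) (hd0 : d ≠ 0) :
    ((d - 1) ::ₘ s.erase d).sum + 1 = s.sum := by
  rw [sum_cons, ← sum_erase hd]
  omega

lemma prod_map_factorial_ne_zero (s : Multiset ℕ) : (s.map Nat.factorial).prod ≠ 0 :=
  prod_ne_zero fun h => by simp [Nat.factorial_ne_zero] at h

lemma mul_prod_factorial_cons_pred_erase {s : Multiset ℕ} {d : ℕ} (hd : d ∈ s) (hd0 : d ≠ 0) :
    d * (((d - 1) ::ₘ s.erase d).map Nat.factorial).prod = (s.map Nat.factorial).prod := by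
  rw [map_cons, prod_cons, ← mul_assoc, Nat.mul_factorial_pred hd0, prod_map_erase hd]

end Multiset

open Multiset

def stringSum (I : Multiset ℕ → ℚ) (t : Multiset ℕ) : ℚ :=
  (t.map fun d => if 1 ≤ d then I ((d - 1) ::ₘ t.erase d) else 0).sum

def psiMultinomial (s : Multiset ℕ) : ℚ :=
  ((card s - 3).factorial : ℚ) / ((s.map Nat.factorial).prod : ℕ)

lemma psiMultinomial_string {t : Multiset ℕ} (hcard : 3 ≤ card t) (hsum : t.sum + 2 = card t) :
    psiMultinomial (0 ::ₘ t) = stringSum psiMultinomial t := by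
  set P := (t.map Nat.factorial).prod
  have hterm : ∀ d ∈ t, (if 1 ≤ d then psiMultinomial ((d - 1) ::ₘ t.erase d) else 0)
      = (d : ℚ) * ((card t - 3).factorial / P) := by
    intro d hd
    obtain rfl | hd0 := eq_or_ne d 0
    · simp
    have hQ : d * (((d - 1) ::ₘ t.erase d).map Nat.factorial).prod = P :=
      mul_prod_factorial_cons_pred_erase hd hd0
    have hQ0 := prod_map_factorial_ne_zero ((d - 1) ::ₘ t.erase d)
    rw [if_pos (Nat.one_le_iff_ne_zero.mpr hd0), psiMultinomial, card_cons_erase _ hd, ← hQ]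
    push_cast
    field_simp
  have hfact : (card t - 2) * (card t - 3).factorial = (card t - 2).factorial := by
    rw [← Nat.mul_factorial_pred (by omega : card t - 2 ≠ 0)]
    rfl
  rw [stringSum, map_congr rfl hterm, sum_map_mul_right, ← Nat.cast_multiset_sum,
    psiMultinomial, card_cons, map_cons, prod_cons, Nat.factorial_zero, one_mul,
    show card t + 1 - 3 = card t - 2 by omega, ← hfact, show t.sum = card t - 2 by omega,
    Nat.cast_mul]
  ring

theorem eq_of_string_of_sum_add_three_eq_card {I J : Multiset ℕ → ℚ}
    (hI : ∀ t, 3 ≤ card t → t.sum + 2 = card t → I (0 ::ₘ t) = stringSum I t)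
    (hJ : ∀ t, 3 ≤ card t → t.sum + 2 = card t → J (0 ::ₘ t) = stringSum J t)
    (h000 : I {0, 0, 0} = J {0, 0, 0}) {s : Multiset ℕ} (hs : s.sum + 3 = card s) :
    I s = J s := by
  suffices ∀ n (u : Multiset ℕ), card u = n + 3 → u.sum = n → I u = J u from
    this s.sum s hs.symm rfl
  intro n
  induction n with
  | zero =>
    intro u hcard hsum
    rw [eq_zero_zero_zero_of_sum_eq_zero hcard hsum]
    exact h000
  | succ n ih =>
    intro u hcard hsum
    obtain ⟨t, rfl⟩ := exists_cons_of_mem (zero_mem_of_sum_lt_card (s := u) (by omega))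
    rw [card_cons] at hcard
    rw [sum_cons, zero_add] at hsum
    rw [hI t (by omega) (by omega), hJ t (by omega) (by omega), stringSum, stringSum]
    refine congrArg sum (map_congr rfl fun d hd => ?_)
    split_ifs with hd1
    · exact ih _ (by rw [card_cons_erase _ hd]; omega)
        (by have := sum_cons_pred_erase hd (by omega); omega)
    · rfl

theorem stmt4_general (I : Multiset ℕ → ℚ)
    (hstring : ∀ s : Multiset ℕ, 3 ≤ s.card →
      I (0 ::ₘ s) =
        (s.map (fun d => if 1 ≤ d then I ((d - 1) ::ₘ s.erase d) else 0)).sum)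
    (hnorm : I {0, 0, 0} = 1) :
    ∀ s : Multiset ℕ, 3 ≤ s.card → s.sum = s.card - 3 →
      I s = (Nat.factorial (s.card - 3) : ℚ) / ((s.map Nat.factorial).prod : ℕ) := by
  intro s hcard hsum
  have hnorm' : I {0, 0, 0} = psiMultinomial {0, 0, 0} := by
    rw [hnorm]
    simp [psiMultinomial]
  exact eq_of_string_of_sum_add_three_eq_card (fun t ht _ => hstring t ht)
    (fun _ => psiMultinomial_string) hnorm' (by omega)

/-- Genus-zero ψ-intersection numbers: a function on multisets of
nonnegative integers satisfying the string equation, ⟨0,0,0⟩₀ = 1, and vanishing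
off the dimension constraint is given by the multinomial formula
⟨d₁,…,dₙ⟩₀ = (n−3)!/(d₁!⋯dₙ!) when d₁+⋯+dₙ = n−3. -/
theorem stmt4 (I : Multiset ℕ → ℚ)
    (hstring : ∀ s : Multiset ℕ, 3 ≤ s.card →
      I (0 ::ₘ s) =
        (s.map (fun d => if 1 ≤ d then I ((d - 1) ::ₘ s.erase d) else 0)).sum)
    (hnorm : I {0, 0, 0} = 1)
    (hvan : ∀ s : Multiset ℕ, 3 ≤ s.card → s.sum ≠ s.card - 3 → I s = 0) :
    ∀ s : Multiset ℕ, 3 ≤ s.card → s.sum = s.card - 3 →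
      I s = (Nat.factorial (s.card - 3) : ℚ) / ((s.map Nat.factorial).prod : ℕ) :=
  stmt4_general I hstring hnorm
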